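/- arXiv:1003.1562 — 5 statements merged into one kernel-verified Lean document; each statement's English description precedes it below -/
import Mathlib

section
/- Hahn-Banach for normed ℤ-modules: Let N ⊆ M be semi-normed ℤ-modules with the inclusion isometric. Then every bounded additive functional f : N → ℝ extends to a bounded additive functional F : M → ℝ with the same operator norm. In particular, the restriction map M' → N' between duals is surjective. -/
/-- Hahn-Banach extension lemma for `ℤ`-modules with sublinear bound `p`. -/
theorem hb_ext {M : Type*} [AddCommGroup M] (p : M → ℝ)
    (hadd : ∀ u v : M, p (u + v) ≤ p u + p v)
    (hsmul : ∀ (n : ℤ) (u : M), p (n • u) = |(n : ℝ)| * p u)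
    (N : AddSubgroup M) (f : N →+ ℝ)
    (hf : ∀ x : N, |f x| ≤ p (x : M)) :
    ∃ F : M →+ ℝ, (∀ x : N, F (x : M) = f x) ∧ ∀ m : M, |F m| ≤ p m := by
  have hp0 : p 0 = 0 := by simpa using hsmul 0 0
  have hpneg : ∀ u : M, p (-u) = p u := by
    intro u; simpa using hsmul (-1) u
  set G₀ : AddSubgroup (M × ℝ) := ((N.subtype).prod f).range with hG₀def
  set S : Set (AddSubgroup (M × ℝ)) :=
    {G | G₀ ≤ G ∧ ∀ q ∈ G, |q.2| ≤ p q.1} with hSdef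
  have hG₀S : G₀ ∈ S := by
    refine ⟨le_rfl, ?_⟩
    rintro q ⟨x, rfl⟩
    exact hf x
  have hzorn : ∀ c ⊆ S, IsChain (· ≤ ·) c → ∀ y ∈ c,
      ∃ ub ∈ S, ∀ z ∈ c, z ≤ ub := by
    intro c hcS hchain y hy
    refine ⟨sSup c, ⟨le_trans (hcS hy).1 (le_sSup hy), ?_⟩, fun z hz => le_sSup hz⟩
    intro q hq
    rw [AddSubgroup.mem_sSup_of_directedOn ⟨y, hy⟩ hchain.directedOn] at hq
    obtain ⟨z, hz, hqz⟩ := hq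
    exact (hcS hz).2 q hqz
  obtain ⟨G, hG₀G, hGmax⟩ := zorn_le_nonempty₀ S hzorn G₀ hG₀S
  have hGS : G ∈ S := hGmax.1
  -- G is a "full graph": every m has a value
  have hfull : ∀ m : M, ∃ r : ℝ, (m, r) ∈ G := by
    by_contra h
    push_neg at h
    obtain ⟨m₀, hm₀⟩ := h
    -- key inequality
    have key : ∀ (x y : M) (r s : ℝ) (m n : ℤ), (x, r) ∈ G → (y, s) ∈ G →
        0 < m → 0 < n →
        (s - p (y - m • m₀)) / (m : ℝ) ≤ (p (x + n • m₀) - r) / (n : ℝ) := by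
      intro x y r s m n hx hy hm hn
      have hmem : ((n • y + m • x : M), (n * s + m * r : ℝ)) ∈ G := by
        have h1 := G.add_mem (G.zsmul_mem hy n) (G.zsmul_mem hx m)
        simpa [Prod.smul_mk, smul_eq_mul] using h1
      have hb := hGS.2 _ hmem
      simp only at hb
      have hsum : (n : ℝ) * s + m * r ≤ p (n • y + m • x) :=
        le_trans (le_abs_self _) hb
      have hrw : (n • y + m • x : M) = n • (y - m • m₀) + m • (x + n • m₀) := by
        module
      have hptot : p (n • y + m • x) ≤
          (n : ℝ) * p (y - m • m₀) + (m : ℝ) * p (x + n • m₀) := by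
        rw [hrw]
        calc p (n • (y - m • m₀) + m • (x + n • m₀))
            ≤ p (n • (y - m • m₀)) + p (m • (x + n • m₀)) := hadd _ _
          _ = (n : ℝ) * p (y - m • m₀) + (m : ℝ) * p (x + n • m₀) := by
              rw [hsmul, hsmul, abs_of_pos (by exact_mod_cast hn),
                abs_of_pos (by exact_mod_cast hm)]
      have hmr : (0 : ℝ) < m := by exact_mod_cast hm
      have hnr : (0 : ℝ) < n := by exact_mod_cast hn
      rw [div_le_div_iff₀ hmr hnr]
      nlinarith [le_trans hsum hptot]
    set A : Set ℝ :=
      {t | ∃ (y : M) (s : ℝ) (m : ℤ), (y, s) ∈ G ∧ 0 < m ∧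
        t = (s - p (y - m • m₀)) / (m : ℝ)} with hAdef
    have hAne : A.Nonempty := by
      exact ⟨(0 - p (0 - (1:ℤ) • m₀)) / ((1:ℤ) : ℝ), 0, 0, 1, G.zero_mem, one_pos, rfl⟩
    have hAbdd : BddAbove A := by
      refine ⟨(p (0 + (1:ℤ) • m₀) - 0) / ((1:ℤ) : ℝ), ?_⟩
      rintro t ⟨y, s, m, hy, hm, rfl⟩
      exact key 0 y 0 s m 1 G.zero_mem hy hm one_pos
    set α : ℝ := sSup A with hαdef
    have P : ∀ (x : M) (r : ℝ) (n : ℤ), (x, r) ∈ G → r + n * α ≤ p (x + n • m₀) := by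
      intro x r n hx
      rcases lt_trichotomy n 0 with hn | hn | hn
      · have ht : (r - p (x - (-n) • m₀)) / ((-n : ℤ) : ℝ) ∈ A :=
          ⟨x, r, -n, hx, by omega, rfl⟩
        have hle : (r - p (x - (-n) • m₀)) / ((-n : ℤ) : ℝ) ≤ α := le_csSup hAbdd ht
        have hnr : (0 : ℝ) < ((-n : ℤ) : ℝ) := by exact_mod_cast (by omega : (0:ℤ) < -n)
        rw [div_le_iff₀ hnr] at hle
        have hx' : (x - (-n) • m₀ : M) = x + n • m₀ := by module
        rw [hx'] at hle
        push_cast at hle ⊢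
        linarith
      · subst hn
        have := le_trans (le_abs_self r) (hGS.2 _ hx)
        simpa using this
      · have hub : α ≤ (p (x + n • m₀) - r) / (n : ℝ) := by
          refine csSup_le hAne ?_
          rintro t ⟨y, s, m, hy, hm, rfl⟩
          exact key x y r s m n hx hy hm hn
        have hnr : (0 : ℝ) < (n : ℝ) := by exact_mod_cast hn
        rw [le_div_iff₀ hnr] at hub
        linarith [mul_comm (α) ((n:ℝ))]
    -- extended subgroup
    set G' : AddSubgroup (M × ℝ) := G ⊔ AddSubgroup.zmultiples (m₀, α) with hG'def
    have hG'S : G' ∈ S := by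
      constructor
      · exact le_trans hGS.1 le_sup_left
      · intro q hq
        rw [hG'def, AddSubgroup.mem_sup] at hq
        obtain ⟨g, hg, z, hz, rfl⟩ := hq
        obtain ⟨k, rfl⟩ := AddSubgroup.mem_zmultiples_iff.mp hz
        have hgpair : ((g.1, g.2) : M × ℝ) ∈ G := by simpa using hg
        have h1 : g.2 + k * α ≤ p (g.1 + k • m₀) := P g.1 g.2 k hgpair
        have hnegpair : ((-g.1, -g.2) : M × ℝ) ∈ G := by
          exact G.neg_mem hgpair
        have h2 := P (-g.1) (-g.2) (-k) hnegpair
        have hx' : (-g.1 + (-k) • m₀ : M) = -(g.1 + k • m₀) := by module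
        rw [hx', hpneg] at h2
        have hfst : (g + k • (m₀, α)).1 = g.1 + k • m₀ := by
          simp [Prod.smul_mk]
        have hsnd : (g + k • (m₀, α)).2 = g.2 + k * α := by
          simp [Prod.smul_mk, smul_eq_mul]
        rw [hfst, hsnd]
        rw [abs_le]
        constructor
        · push_cast at h2; linarith
        · exact h1
    have hle : G' ≤ G := hGmax.2 hG'S (le_sup_left)
    exact hm₀ α (hle (by
      refine AddSubgroup.mem_sup.mpr ⟨0, G.zero_mem, (m₀, α), ?_, by simp⟩
      exact AddSubgroup.mem_zmultiples _))
  have huniq : ∀ (m : M) (r r' : ℝ), (m, r) ∈ G → (m, r') ∈ G → r = r' := by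
    intro m r r' h1 h2
    have h3 : ((m, r) - (m, r') : M × ℝ) ∈ G := G.sub_mem h1 h2
    have h4 := hGS.2 _ h3
    simp only [Prod.fst_sub, Prod.snd_sub, sub_self, hp0] at h4
    have : |r - r'| ≤ 0 := h4
    have := abs_nonneg (r - r')
    linarith [abs_eq_zero.mp (le_antisymm h4 (abs_nonneg _)),
      sub_eq_zero.mp (abs_eq_zero.mp (le_antisymm h4 (abs_nonneg _)))]
  choose Ffun hFfun using hfull
  have Fadd : ∀ u v : M, Ffun (u + v) = Ffun u + Ffun v := by
    intro u v
    have : ((u + v, Ffun u + Ffun v) : M × ℝ) ∈ G := by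
      simpa using G.add_mem (hFfun u) (hFfun v)
    exact huniq _ _ _ (hFfun (u + v)) this
  refine ⟨⟨⟨Ffun, ?_⟩, Fadd⟩, ?_, ?_⟩
  · have : ((0, (0:ℝ)) : M × ℝ) ∈ G := G.zero_mem
    exact huniq 0 _ 0 (hFfun 0) this
  · intro x
    have hx : (((x : M), f x) : M × ℝ) ∈ G := hGS.1 ⟨x, rfl⟩
    exact huniq _ _ _ (hFfun (x : M)) hx
  · intro m
    exact hGS.2 _ (hFfun m)

/-- The operator (semi-)norm of an additive functional relative to a semi-norm `ν`. -/
noncomputable def opN {M : Type*} [AddCommGroup M] (ν : M → ℝ) (f : M →+ ℝ) : ℝ :=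
  sInf {c : ℝ | 0 ≤ c ∧ ∀ m : M, |f m| ≤ c * ν m}

/-- **Hahn–Banach for normed ℤ-modules.** Let `N ⊆ M` be semi-normed
ℤ-modules (`N` carries the restricted semi-norm, so the inclusion is isometric).
Every bounded additive functional `f : N → ℝ` extends to a bounded additive
functional `F : M → ℝ` with the same operator norm; in particular every bound `c`
for `f` is a bound for some extension `F`, and the restriction map `M' → N'` on
duals is surjective. -/
theorem hahn_banach_normed_zmodule
    {M : Type*} [AddCommGroup M] (ν : M → ℝ)
    (hν0 : ∀ m : M, 0 ≤ ν m)
    (hνadd : ∀ u v : M, ν (u + v) ≤ ν u + ν v)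
    (hνsmul : ∀ (n : ℤ) (u : M), ν (n • u) = |(n : ℝ)| * ν u)
    (N : AddSubgroup M) (f : N →+ ℝ)
    (c : ℝ) (hc : 0 ≤ c) (hf : ∀ x : N, |f x| ≤ c * ν (x : M)) :
    ∃ F : M →+ ℝ, (∀ x : N, F (x : M) = f x) ∧ (∀ m : M, |F m| ≤ c * ν m) ∧
      opN ν F = opN (fun x : N => ν (x : M)) f := by
  classical
  set Sf : Set ℝ := {c' : ℝ | 0 ≤ c' ∧ ∀ x : N, |f x| ≤ c' * ν (x : M)} with hSf
  have hcSf : c ∈ Sf := ⟨hc, hf⟩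
  have hSfne : Sf.Nonempty := ⟨c, hcSf⟩
  have hSfbdd : BddBelow Sf := ⟨0, fun c' hc' => hc'.1⟩
  set c₀ : ℝ := sInf Sf with hc₀
  have hc₀0 : 0 ≤ c₀ := le_csInf hSfne fun c' hc' => hc'.1
  have hc₀c : c₀ ≤ c := csInf_le hSfbdd hcSf
  have hfc₀ : ∀ x : N, |f x| ≤ c₀ * ν (x : M) := by
    intro x
    rcases eq_or_lt_of_le (hν0 (x : M)) with hx0 | hx0
    · have : |f x| ≤ 0 := by
        have := hf x; rw [← hx0] at this; simpa using this
      calc |f x| ≤ 0 := this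
        _ = c₀ * ν (x : M) := by rw [← hx0]; ring
    · have : |f x| / ν (x : M) ≤ c₀ := by
        refine le_csInf hSfne ?_
        intro c' hc'
        rw [div_le_iff₀ hx0]
        exact hc'.2 x
      calc |f x| = |f x| / ν (x : M) * ν (x : M) := by field_simp
        _ ≤ c₀ * ν (x : M) := mul_le_mul_of_nonneg_right this (le_of_lt hx0)
  obtain ⟨F, hFext, hFbd⟩ := hb_ext (fun m => c₀ * ν m)
    (fun u v => by
      simpa [mul_add] using mul_le_mul_of_nonneg_left (hνadd u v) hc₀0)
    (fun n u => by simp only [hνsmul]; ring) N f hfc₀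
  refine ⟨F, hFext, ?_, ?_⟩
  · intro m
    exact le_trans (hFbd m) (mul_le_mul_of_nonneg_right hc₀c (hν0 m))
  · have hSF : ∀ c', (0 ≤ c' ∧ ∀ m : M, |F m| ≤ c' * ν m) → c' ∈ Sf := by
      intro c' hc'
      exact ⟨hc'.1, fun x => by rw [← hFext x]; exact hc'.2 (x : M)⟩
    have h1 : opN ν F ≤ c₀ := csInf_le ⟨0, fun c' hc' => hc'.1⟩ ⟨hc₀0, hFbd⟩
    have h2 : c₀ ≤ opN ν F := by
      refine le_csInf ⟨c₀, hc₀0, hFbd⟩ ?_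
      intro c' hc'
      exact csInf_le hSfbdd (hSF c' hc')
    have : opN ν F = c₀ := le_antisymm h1 h2
    rw [this]
    rfl
end

section
/- Supporting functionals exist for normed ℤ-modules: Let M be a semi-normed ℤ-module and m ∈ M. Then there exists a bounded additive functional f : M → ℝ with operator norm at most 1 and |f(m)| = ‖m‖. -/
theorem hahn_banach_group {M : Type*} [AddCommGroup M] (q : M → ℝ)
    (hadd : ∀ u v, q (u + v) ≤ q u + q v)
    (hsmul : ∀ (k : ℕ), 1 ≤ k → ∀ u, q (k • u) = k * q u) :
    ∃ f : M →+ ℝ, ∀ u, f u ≤ q u := by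
  classical
  have hq0 : q 0 = 0 := by
    have h := hsmul 2 (by norm_num) 0
    simp only [smul_zero, Nat.cast_ofNat] at h
    linarith
  set S : Set (AddSubgroup (M × ℝ)) := {G | ∀ p ∈ G, p.2 ≤ q p.1} with hS
  obtain ⟨G, hG⟩ : ∃ G, Maximal (· ∈ S) G := by
    apply zorn_le₀ S
    intro c hcS hchain
    rcases c.eq_empty_or_nonempty with rfl | hne
    · refine ⟨⊥, ?_, by simp⟩
      intro p hp
      simp only [AddSubgroup.mem_bot] at hp
      simp [hp, hq0]
    · refine ⟨sSup c, ?_, fun z hz => le_sSup hz⟩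
      intro p hp
      rw [AddSubgroup.mem_sSup_of_directedOn hne hchain.directedOn] at hp
      obtain ⟨G, hGc, hpG⟩ := hp
      exact hcS hGc p hpG
  have hGS : G ∈ S := hG.1
  -- key: the domain of G is all of M
  have hfull : ∀ x : M, ∃ t : ℝ, (x, t) ∈ G := by
    intro x
    by_contra hx
    push_neg at hx
    -- key inequality
    have key : ∀ p ∈ G, ∀ p' ∈ G, ∀ j k : ℕ, 1 ≤ j → 1 ≤ k →
        k * p.2 + j * p'.2 ≤ k * q (p.1 - j • x) + j * q (p'.1 + k • x) := by
      rintro ⟨u, t⟩ hp ⟨u', t'⟩ hp' j k hj hk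
      have hmem : ((k • u + j • u' : M), (k * t + j * t' : ℝ)) ∈ G := by
        have h1 := G.nsmul_mem hp k
        have h2 := G.nsmul_mem hp' j
        have := G.add_mem h1 h2
        simpa [Prod.smul_def, smul_eq_mul] using this
      have h1 : (k : ℝ) * t + j * t' ≤ q (k • u + j • u') := hGS _ hmem
      have heq : k • u + j • u' = k • (u - j • x) + j • (u' + k • x) := by
        simp only [smul_sub, smul_add, smul_smul]
        rw [mul_comm k j]
        abel
      calc (k : ℝ) * t + j * t' ≤ q (k • u + j • u') := h1
        _ = q (k • (u - j • x) + j • (u' + k • x)) := by rw [heq]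
        _ ≤ q (k • (u - j • x)) + q (j • (u' + k • x)) := hadd _ _
        _ = k * q (u - j • x) + j * q (u' + k • x) := by
            rw [hsmul k hk, hsmul j hj]
    set A : Set ℝ := {r | ∃ p ∈ G, ∃ j : ℕ, 1 ≤ j ∧ r = (p.2 - q (p.1 - j • x)) / j} with hA
    have hAne : A.Nonempty := ⟨_, ⟨((0:M), (0:ℝ)), G.zero_mem, 1, le_refl 1, rfl⟩⟩
    have hAle : ∀ r ∈ A, ∀ p' ∈ G, ∀ k : ℕ, 1 ≤ k → r ≤ (q (p'.1 + k • x) - p'.2) / k := by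
      rintro r ⟨p, hp, j, hj, rfl⟩ p' hp' k hk
      have hk0 : (0:ℝ) < k := by exact_mod_cast hk
      have hj0 : (0:ℝ) < j := by exact_mod_cast hj
      rw [div_le_div_iff₀ hj0 hk0]
      have := key p hp p' hp' j k hj hk
      nlinarith [this]
    have hAbdd : BddAbove A :=
      ⟨_, fun r hr => hAle r hr ((0:M), (0:ℝ)) G.zero_mem 1 (le_refl 1)⟩
    set c : ℝ := sSup A with hc
    have hle1 : ∀ p ∈ G, ∀ j : ℕ, 1 ≤ j → (p.2 - q (p.1 - j • x)) / j ≤ c :=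
      fun p hp j hj => le_csSup hAbdd ⟨p, hp, j, hj, rfl⟩
    have hle2 : ∀ p ∈ G, ∀ k : ℕ, 1 ≤ k → c ≤ (q (p.1 + k • x) - p.2) / k :=
      fun p hp k hk => csSup_le hAne (fun r hr => hAle r hr p hp k hk)
    -- extended subgroup
    set G' : AddSubgroup (M × ℝ) := G ⊔ AddSubgroup.zmultiples (x, c) with hG'
    have hG'S : G' ∈ S := by
      rintro p hp
      rw [hG', AddSubgroup.mem_sup] at hp
      obtain ⟨⟨u, t⟩, hyG, z, hz, hyz⟩ := hp
      obtain ⟨n, rfl⟩ := AddSubgroup.mem_zmultiples_iff.mp hz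
      subst hyz
      have ht : t ≤ q u := hGS _ hyG
      have hsm : n • ((x : M), (c : ℝ)) = (n • x, (n : ℝ) * c) := by
        simp [Prod.smul_def, zsmul_eq_mul]
      rw [hsm]
      show t + (n:ℝ) * c ≤ q (u + n • x)
      rcases lt_trichotomy n 0 with hn | rfl | hn
      · -- n negative
        obtain ⟨j, hj1, hjn⟩ : ∃ j : ℕ, 1 ≤ j ∧ n = -(j : ℤ) := ⟨n.natAbs, by omega, by omega⟩
        have hj0 : (0:ℝ) < j := by exact_mod_cast hj1
        have h1 := hle1 (u, t) hyG j hj1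
        rw [div_le_iff₀ hj0] at h1
        have hx1 : u + n • x = u - j • x := by
          rw [hjn, neg_zsmul, natCast_zsmul]
          abel
        rw [hx1, hjn]
        push_cast
        nlinarith [h1]
      · simpa using ht
      · -- n positive
        obtain ⟨k, hk1, hkn⟩ : ∃ k : ℕ, 1 ≤ k ∧ n = (k : ℤ) := ⟨n.natAbs, by omega, by omega⟩
        have hk0 : (0:ℝ) < k := by exact_mod_cast hk1
        have h2 := hle2 (u, t) hyG k hk1
        rw [le_div_iff₀ hk0] at h2
        have hx1 : u + n • x = u + k • x := by rw [hkn, natCast_zsmul]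
        rw [hx1, hkn]
        push_cast
        nlinarith [h2]
    have hlt : G ≤ G' := le_sup_left
    have := hG.2 hG'S hlt
    have hxc : (x, c) ∈ G :=
      this ((le_sup_right : _ ≤ G') (AddSubgroup.mem_zmultiples _))
    exact hx c hxc
  -- uniqueness
  have huniq : ∀ x : M, ∀ t t' : ℝ, (x, t) ∈ G → (x, t') ∈ G → t = t' := by
    intro x t t' h1 h2
    have h3 : ((0:M), t - t') ∈ G := by
      have := G.add_mem h1 (G.neg_mem h2)
      simpa [Prod.ext_iff, sub_eq_add_neg] using this
    have h4 : ((0:M), t' - t) ∈ G := by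
      have := G.add_mem h2 (G.neg_mem h1)
      simpa [Prod.ext_iff, sub_eq_add_neg] using this
    have := hGS _ h3
    have := hGS _ h4
    simp only [hq0] at *
    linarith
  choose f hf using hfull
  refine ⟨AddMonoidHom.mk' f ?_, ?_⟩
  · intro a b
    exact huniq (a + b) _ _ (hf (a+b)) (by simpa using G.add_mem (hf a) (hf b))
  · intro u
    exact hGS _ (hf u)

/-- Supporting functionals exist for semi-normed ℤ-modules:
for every `m ∈ M` there is a bounded additive functional `f : M → ℝ` of operator
norm at most `1` (i.e. `|f u| ≤ ν u` for all `u`) with `|f m| = ν m`. -/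
theorem supporting_functional_exists
    {M : Type*} [AddCommGroup M] (ν : M → ℝ)
    (hν0 : ∀ m : M, 0 ≤ ν m)
    (hνadd : ∀ u v : M, ν (u + v) ≤ ν u + ν v)
    (hνsmul : ∀ (n : ℤ) (u : M), ν (n • u) = |(n : ℝ)| * ν u)
    (m : M) :
    ∃ f : M →+ ℝ, (∀ u : M, |f u| ≤ ν u) ∧ |f m| = ν m := by
  classical
  have hνnat : ∀ (n : ℕ) (u : M), ν (n • u) = n * ν u := by
    intro n u
    have := hνsmul (n : ℤ) u
    rw [natCast_zsmul] at this
    simpa [abs_of_nonneg (by positivity : (0:ℝ) ≤ (n:ℝ))] using this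
  have hνneg : ∀ u : M, ν (-u) = ν u := by
    intro u
    have := hνsmul (-1) u
    simpa using this
  have hνzero : ν 0 = 0 := by
    have := hνnat 0 0
    simpa using this
  set a : ℕ → M → ℝ := fun n u => ν (u + n • m) - n * ν m with ha
  have hbdd : ∀ u, ∀ n : ℕ, -ν (-u) ≤ a n u := by
    intro u n
    have h1 : ν (n • m) ≤ ν (-u) + ν (u + n • m) := by
      have := hνadd (-u) (u + n • m)
      simpa [neg_add_cancel_left] using this
    rw [hνnat] at h1
    simp only [ha]
    linarith
  have hBdd : ∀ u, BddBelow (Set.range fun n : ℕ => a n u) := by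
    intro u
    exact ⟨-ν (-u), by rintro r ⟨n, rfl⟩; exact hbdd u n⟩
  set q : M → ℝ := fun u => ⨅ n : ℕ, a n u with hq
  have q_le_a : ∀ u (n : ℕ), q u ≤ a n u := fun u n => ciInf_le (hBdd u) n
  have q_le : ∀ u, q u ≤ ν u := by
    intro u
    have := q_le_a u 0
    simpa [ha] using this
  have neg_le_q : ∀ u, -ν (-u) ≤ q u := fun u => le_ciInf (hbdd u)
  have q_add : ∀ u v, q (u + v) ≤ q u + q v := by
    intro u v
    have key : ∀ n k : ℕ, a (n + k) (u + v) ≤ a n u + a k v := by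
      intro n k
      simp only [ha]
      have h1 : ν (u + v + (n + k) • m) ≤ ν (u + n • m) + ν (v + k • m) := by
        have := hνadd (u + n • m) (v + k • m)
        have heq : u + v + (n + k) • m = (u + n • m) + (v + k • m) := by
          rw [add_smul]; abel
        rw [heq]; exact this
      push_cast
      linarith
    have h1 : ∀ n : ℕ, q (u + v) - a n u ≤ q v := by
      intro n
      apply le_ciInf
      intro k
      have := q_le_a (u + v) (n + k)
      have := key n k
      linarith
    have h2 : ∀ n : ℕ, q (u + v) - q v ≤ a n u := fun n => by linarith [h1 n]
    have := le_ciInf h2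
    linarith
  have q_smul : ∀ (k : ℕ), 1 ≤ k → ∀ u, q (k • u) = k * q u := by
    intro k hk u
    have hk0 : (0:ℝ) < k := by exact_mod_cast hk
    apply le_antisymm
    · -- q(k•u) ≤ k * q u
      have h1 : ∀ n : ℕ, a (k * n) (k • u) = k * a n u := by
        intro n
        simp only [ha]
        have : k • u + (k * n) • m = k • (u + n • m) := by
          rw [smul_add, mul_smul]
        rw [this, hνnat]
        push_cast
        ring
      have h2 : ∀ n : ℕ, q (k • u) / k ≤ a n u := by
        intro n
        rw [div_le_iff₀ hk0, mul_comm]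
        calc q (k • u) ≤ a (k * n) (k • u) := q_le_a _ _
          _ = k * a n u := h1 n
      have := le_ciInf h2
      rw [div_le_iff₀ hk0] at this
      linarith [this]
    · -- k * q u ≤ q (k•u)
      apply le_ciInf
      intro n
      have hmono : a (k * n) (k • u) ≤ a n (k • u) := by
        -- a is nonincreasing in n
        have : ∀ j i : ℕ, i ≤ j → a j (k • u) ≤ a i (k • u) := by
          intro j i hij
          simp only [ha]
          obtain ⟨d, rfl⟩ := Nat.exists_eq_add_of_le hij
          have h1 : ν (k • u + (i + d) • m) ≤ ν (k • u + i • m) + d * ν m := by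
            have := hνadd (k • u + i • m) (d • m)
            rw [hνnat] at this
            have heq : k • u + (i + d) • m = (k • u + i • m) + d • m := by
              rw [add_smul]; abel
            rw [heq]; exact this
          push_cast
          linarith
        exact this (k * n) n (Nat.le_mul_of_pos_left n (by omega))
      have h1 : a (k * n) (k • u) = k * a n u := by
        simp only [ha]
        have : k • u + (k * n) • m = k • (u + n • m) := by
          rw [smul_add, mul_smul]
        rw [this, hνnat]
        push_cast
        ring
      calc (k:ℝ) * q u ≤ k * a n u := by
            have := q_le_a u n
            nlinarith
        _ = a (k * n) (k • u) := h1.symm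
        _ ≤ a n (k • u) := hmono
  have q_m : q m = ν m := by
    have hconst : ∀ n : ℕ, a n m = ν m := by
      intro n
      simp only [ha]
      have : m + n • m = (n + 1) • m := by rw [add_smul]; simp; abel
      rw [this, hνnat]
      push_cast
      ring
    apply le_antisymm
    · simpa [hconst 0] using q_le_a m 0
    · exact le_ciInf fun n => (hconst n).ge
  have q_neg_m : q (-m) = -ν m := by
    apply le_antisymm
    · have := q_le_a (-m) 1
      simpa [ha, hνzero] using this
    · apply le_ciInf
      intro n
      simp only [ha]
      have h1 : -m + n • m = ((n : ℤ) - 1) • m := by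
        rw [sub_smul, natCast_zsmul]
        simp
        abel
      rw [h1, hνsmul]
      have h2 : (n:ℝ) - 1 ≤ |(((n:ℤ) - 1 : ℤ) : ℝ)| := by
        push_cast
        exact le_abs_self _
      nlinarith [hν0 m, abs_nonneg ((((n:ℤ) - 1 : ℤ) : ℝ)), h2]
  obtain ⟨f, hf⟩ := hahn_banach_group q q_add q_smul
  refine ⟨f, ?_, ?_⟩
  · intro u
    rw [abs_le]
    constructor
    · have h1 : f (-u) ≤ q (-u) := hf (-u)
      rw [map_neg] at h1
      have := q_le (-u)
      rw [hνneg] at this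
      linarith
    · linarith [hf u, q_le u]
  · have h1 : f m ≤ ν m := le_trans (hf m) q_m.le
    have h2 : f (-m) ≤ -ν m := by
      have := hf (-m)
      rw [q_neg_m] at this
      exact this
    rw [map_neg] at h2
    have h3 : f m = ν m := by linarith
    rw [h3, abs_of_nonneg (hν0 m)]
end

section
/- Let M be a torsion-free abelian group with a semi-norm ‖·‖ satisfying ‖n·u‖ = |n|‖u‖ for integers n. Then there is a unique semi-norm on ℚ ⊗_ℤ M making the natural injection M → ℚ ⊗_ℤ M, m ↦ 1⊗m, an isometry; explicitly, ‖∑ (a_i/b_i) ⊗ m_i‖ = c^{-1}‖∑ (a_i c / b_i) m_i‖_M where c = b_1 b_2 ⋯ b_n. Moreover, the induced restriction map (ℚ ⊗_ℤ M)' → M' between dual spaces is an isometric isomorphism. -/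
/-!
Every `x : ℚ ⊗[ℤ] M` has a nonzero integer multiple of the form `n • x = 1 ⊗ₜ m`, since `ℚ ⊗[ℤ] M`
is the localization of `M` at `ℤ \ {0}`. So a ℤ-homogeneous `φ` extending `ν` is forced to be
`φ x = ν m / |n|`, and an additive `F` extending `f` is forced to be `F x = f m / n`; this gives both
uniqueness statements and the bound `|F x| ≤ c * φ x`. Conversely, torsion-freeness makes `1 ⊗ₜ -`
injective, so `ν m / |n|` does not depend on the chosen representation, and it inherits
subadditivity and homogeneity from `ν` after passing to a common denominator.
-/

open TensorProduct

section
variable {M : Type*} [AddCommGroup M]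

theorem exists_zsmul_eq_one_tmul (x : ℚ ⊗[ℤ] M) :
    ∃ p : ℤ × M, p.1 ≠ 0 ∧ p.1 • x = (1 : ℚ) ⊗ₜ p.2 := by
  obtain ⟨⟨m, s⟩, h⟩ := IsLocalizedModule.surj (nonZeroDivisors ℤ) (TensorProduct.mk ℤ ℚ M 1) x
  exact ⟨(s, m), nonZeroDivisors.coe_ne_zero s, h⟩

theorem den_zsmul_tmul (q : ℚ) (m : M) :
    (q.den : ℤ) • (q ⊗ₜ[ℤ] m) = (1 : ℚ) ⊗ₜ (q.num • m) := by
  rw [smul_tmul', ← smul_tmul, zsmul_eq_mul, zsmul_eq_mul, mul_one, Int.cast_natCast,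
    mul_comm, Rat.mul_den_eq_num]

theorem one_tmul_injective (htf : ∀ (n : ℤ) (m : M), n ≠ 0 → n • m = 0 → m = 0) :
    Function.Injective fun m : M ↦ (1 : ℚ) ⊗ₜ[ℤ] m := by
  intro a b h
  obtain ⟨c, hc⟩ := IsLocalizedModule.exists_of_eq (S := nonZeroDivisors ℤ)
    (f := TensorProduct.mk ℤ ℚ M 1) h
  exact sub_eq_zero.1 <| htf c _ (nonZeroDivisors.coe_ne_zero c) <| by
    rw [smul_sub, sub_eq_zero]; exact hc

theorem eq_div_abs_of_zsmul_eq_one_tmul {φ : ℚ ⊗[ℤ] M → ℝ} {ν : M → ℝ}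
    (hsmul : ∀ (n : ℤ) (u : ℚ ⊗[ℤ] M), φ (n • u) = |(n : ℝ)| * φ u)
    (hone : ∀ m : M, φ ((1 : ℚ) ⊗ₜ m) = ν m) {n : ℤ} (hn : n ≠ 0) {x : ℚ ⊗[ℤ] M} {m : M}
    (h : n • x = (1 : ℚ) ⊗ₜ m) : φ x = ν m / |(n : ℝ)| := by
  rw [← hone, ← h, hsmul, mul_div_cancel_left₀ _ (by positivity)]

theorem AddMonoidHom.eq_div_of_zsmul_eq_one_tmul {F : ℚ ⊗[ℤ] M →+ ℝ} {f : M → ℝ}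
    (hone : ∀ m : M, F ((1 : ℚ) ⊗ₜ m) = f m) {n : ℤ} (hn : n ≠ 0) {x : ℚ ⊗[ℤ] M} {m : M}
    (h : n • x = (1 : ℚ) ⊗ₜ m) : F x = f m / n := by
  rw [← hone, ← h, map_zsmul, zsmul_eq_mul, mul_div_cancel_left₀ _ (by exact_mod_cast hn)]

theorem abs_le_mul_of_one_tmul {φ : ℚ ⊗[ℤ] M → ℝ} {ν : M → ℝ}
    (hsmul : ∀ (n : ℤ) (u : ℚ ⊗[ℤ] M), φ (n • u) = |(n : ℝ)| * φ u)
    (hone : ∀ m : M, φ ((1 : ℚ) ⊗ₜ m) = ν m) {F : ℚ ⊗[ℤ] M →+ ℝ} {f : M → ℝ}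
    (hF : ∀ m : M, F ((1 : ℚ) ⊗ₜ m) = f m) {c : ℝ} (hf : ∀ m : M, |f m| ≤ c * ν m)
    (x : ℚ ⊗[ℤ] M) : |F x| ≤ c * φ x := by
  obtain ⟨⟨n, m⟩, hn, h⟩ := exists_zsmul_eq_one_tmul x
  rw [F.eq_div_of_zsmul_eq_one_tmul hF hn h, eq_div_abs_of_zsmul_eq_one_tmul hsmul hone hn h,
    abs_div, mul_div_assoc']
  exact div_le_div_of_nonneg_right (hf m) (abs_nonneg _)

theorem apply_tmul_eq_abs_mul {φ : ℚ ⊗[ℤ] M → ℝ} {ν : M → ℝ}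
    (hsmul : ∀ (n : ℤ) (u : ℚ ⊗[ℤ] M), φ (n • u) = |(n : ℝ)| * φ u)
    (hone : ∀ m : M, φ ((1 : ℚ) ⊗ₜ m) = ν m)
    (hνsmul : ∀ (n : ℤ) (u : M), ν (n • u) = |(n : ℝ)| * ν u) (q : ℚ) (m : M) :
    φ (q ⊗ₜ m) = |(q : ℝ)| * ν m := by
  rw [eq_div_abs_of_zsmul_eq_one_tmul hsmul hone (by exact_mod_cast q.den_nz)
    (den_zsmul_tmul q m), hνsmul, Rat.cast_def, abs_div]
  push_cast
  ring

theorem AddMonoidHom.ext_of_one_tmul {F F' : ℚ ⊗[ℤ] M →+ ℝ}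
    (h : ∀ m : M, F ((1 : ℚ) ⊗ₜ m) = F' ((1 : ℚ) ⊗ₜ m)) : F = F' := by
  ext x
  obtain ⟨⟨n, m⟩, hn, hx⟩ := exists_zsmul_eq_one_tmul x
  rw [F.eq_div_of_zsmul_eq_one_tmul h hn hx, F'.eq_div_of_zsmul_eq_one_tmul (fun _ ↦ rfl) hn hx]

noncomputable def rationalSeminorm (ν : M → ℝ) (x : ℚ ⊗[ℤ] M) : ℝ :=
  ν (exists_zsmul_eq_one_tmul x).choose.2 / |((exists_zsmul_eq_one_tmul x).choose.1 : ℝ)|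

section rationalSeminorm

variable {ν : M → ℝ} (htf : ∀ (n : ℤ) (m : M), n ≠ 0 → n • m = 0 → m = 0)
  (hνsmul : ∀ (n : ℤ) (u : M), ν (n • u) = |(n : ℝ)| * ν u)
include htf hνsmul

theorem rationalSeminorm_eq {n : ℤ} (hn : n ≠ 0) {x : ℚ ⊗[ℤ] M} {m : M}
    (h : n • x = (1 : ℚ) ⊗ₜ m) : rationalSeminorm ν x = ν m / |(n : ℝ)| := by
  rw [rationalSeminorm]
  obtain ⟨hk, hkx⟩ := (exists_zsmul_eq_one_tmul x).choose_spec
  generalize (exists_zsmul_eq_one_tmul x).choose = p at hk hkx ⊢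
  obtain ⟨k, w⟩ := p
  dsimp only at hk hkx ⊢
  -- `1 ⊗ₜ (n • w)` and `1 ⊗ₜ (k • m)` are both `(n * k) • x`
  have hcross : n • w = k • m := one_tmul_injective htf <| by
    simp only [tmul_smul, ← hkx, ← h]
    exact smul_comm n k x
  have hν := congrArg ν hcross
  rw [hνsmul, hνsmul] at hν
  rw [div_eq_div_iff (by positivity) (by positivity)]
  linarith

theorem rationalSeminorm_one_tmul (m : M) : rationalSeminorm ν ((1 : ℚ) ⊗ₜ m) = ν m := by
  rw [rationalSeminorm_eq htf hνsmul one_ne_zero (one_smul ℤ _), Int.cast_one, abs_one, div_one]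

theorem rationalSeminorm_zsmul (z : ℤ) (x : ℚ ⊗[ℤ] M) :
    rationalSeminorm ν (z • x) = |(z : ℝ)| * rationalSeminorm ν x := by
  obtain ⟨⟨n, m⟩, hn, h⟩ := exists_zsmul_eq_one_tmul x
  have hz : n • z • x = (1 : ℚ) ⊗ₜ (z • m) := by rw [smul_comm, h, tmul_smul]
  rw [rationalSeminorm_eq htf hνsmul hn hz, rationalSeminorm_eq htf hνsmul hn h, hνsmul,
    mul_div_assoc]

theorem rationalSeminorm_add_le (hνadd : ∀ u v : M, ν (u + v) ≤ ν u + ν v)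
    (x y : ℚ ⊗[ℤ] M) :
    rationalSeminorm ν (x + y) ≤ rationalSeminorm ν x + rationalSeminorm ν y := by
  obtain ⟨⟨n, a⟩, hn, hx⟩ := exists_zsmul_eq_one_tmul x
  obtain ⟨⟨k, b⟩, hk, hy⟩ := exists_zsmul_eq_one_tmul y
  have hxy : (n * k) • (x + y) = (1 : ℚ) ⊗ₜ (k • a + n • b) := by
    rw [smul_add, mul_comm, mul_smul, hx, mul_comm, mul_smul, hy, tmul_add, tmul_smul, tmul_smul]
  rw [rationalSeminorm_eq htf hνsmul (mul_ne_zero hn hk) hxy, rationalSeminorm_eq htf hνsmul hn hx,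
    rationalSeminorm_eq htf hνsmul hk hy,
    div_add_div _ _ (by positivity : |(n : ℝ)| ≠ 0) (by positivity : |(k : ℝ)| ≠ 0)]
  have hnum : ν (k • a + n • b) ≤ ν a * |(k : ℝ)| + |(n : ℝ)| * ν b :=
    calc ν (k • a + n • b) ≤ ν (k • a) + ν (n • b) := hνadd _ _
      _ = ν a * |(k : ℝ)| + |(n : ℝ)| * ν b := by rw [hνsmul, hνsmul, mul_comm]
  rw [Int.cast_mul, abs_mul]
  exact div_le_div_of_nonneg_right hnum (by positivity)

theorem eq_rationalSeminorm {φ : ℚ ⊗[ℤ] M → ℝ}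
    (hsmul : ∀ (n : ℤ) (u : ℚ ⊗[ℤ] M), φ (n • u) = |(n : ℝ)| * φ u)
    (hone : ∀ m : M, φ ((1 : ℚ) ⊗ₜ m) = ν m) : φ = rationalSeminorm ν := by
  funext x
  obtain ⟨⟨n, m⟩, hn, h⟩ := exists_zsmul_eq_one_tmul x
  rw [eq_div_abs_of_zsmul_eq_one_tmul hsmul hone hn h, rationalSeminorm_eq htf hνsmul hn h]

end rationalSeminorm

end

theorem rationalization_seminorm_unique_and_dual_iso_general
    {M : Type*} [AddCommGroup M]
    (htf : ∀ (n : ℤ) (m : M), n ≠ 0 → n • m = 0 → m = 0)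
    (ν : M → ℝ)
    (hνadd : ∀ u v : M, ν (u + v) ≤ ν u + ν v)
    (hνsmul : ∀ (n : ℤ) (u : M), ν (n • u) = |(n : ℝ)| * ν u) :
    (∃! ν' : ℚ ⊗[ℤ] M → ℝ,
      (∀ u v : ℚ ⊗[ℤ] M, ν' (u + v) ≤ ν' u + ν' v) ∧
      (∀ (n : ℤ) (u : ℚ ⊗[ℤ] M), ν' (n • u) = |(n : ℝ)| * ν' u) ∧
      (∀ m : M, ν' ((1 : ℚ) ⊗ₜ[ℤ] m) = ν m)) ∧
    (∀ ν' : ℚ ⊗[ℤ] M → ℝ,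
      ((∀ u v : ℚ ⊗[ℤ] M, ν' (u + v) ≤ ν' u + ν' v) ∧
       (∀ (n : ℤ) (u : ℚ ⊗[ℤ] M), ν' (n • u) = |(n : ℝ)| * ν' u) ∧
       (∀ m : M, ν' ((1 : ℚ) ⊗ₜ[ℤ] m) = ν m)) →
      -- explicit formula on elementary tensors
      (∀ (q : ℚ) (m : M), ν' (q ⊗ₜ[ℤ] m) = |(q : ℝ)| * ν m) ∧
      -- the restriction map on duals is an isometric isomorphism
      (∀ (f : M →+ ℝ) (c : ℝ), 0 ≤ c → (∀ m : M, |f m| ≤ c * ν m) →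
        ∃ F : ℚ ⊗[ℤ] M →+ ℝ,
          (∀ m : M, F ((1 : ℚ) ⊗ₜ[ℤ] m) = f m) ∧
          (∀ x : ℚ ⊗[ℤ] M, |F x| ≤ c * ν' x) ∧
          (∀ F' : ℚ ⊗[ℤ] M →+ ℝ,
            (∀ m : M, F' ((1 : ℚ) ⊗ₜ[ℤ] m) = f m) → F' = F))) := by
  refine ⟨⟨rationalSeminorm ν, ⟨rationalSeminorm_add_le htf hνsmul hνadd,
    rationalSeminorm_zsmul htf hνsmul, rationalSeminorm_one_tmul htf hνsmul⟩,
    fun φ ⟨_, hsmul, hone⟩ ↦ eq_rationalSeminorm htf hνsmul hsmul hone⟩, ?_⟩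
  rintro φ ⟨-, hsmul, hone⟩
  refine ⟨apply_tmul_eq_abs_mul hsmul hone hνsmul, fun f c _ hf ↦ ?_⟩
  let F : ℚ ⊗[ℤ] M →+ ℝ := (f.toIntLinearMap.liftBaseChange ℚ).toAddMonoidHom
  have hF : ∀ m : M, F ((1 : ℚ) ⊗ₜ m) = f m := fun m ↦ one_smul ℚ (f m)
  exact ⟨F, hF, abs_le_mul_of_one_tmul hsmul hone hF hf,
    fun F' hF' ↦ AddMonoidHom.ext_of_one_tmul fun m ↦ (hF' m).trans (hF m).symm⟩

/-- Let `M` be a torsion-free abelian group with a semi-norm `ν`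
satisfying `ν (n • u) = |n| ν u` for integers `n`. Then there is a unique semi-norm
on `ℚ ⊗_ℤ M` (i.e. a subadditive, ℤ-homogeneous function) making the natural
injection `m ↦ 1 ⊗ m` an isometry; it is given by the explicit formula
`ν' (q ⊗ m) = |q| ν m` on elementary tensors. Moreover, the induced restriction map
between dual spaces is an isometric isomorphism: every bounded additive functional
`f` on `M` extends uniquely to an additive functional `F` on `ℚ ⊗_ℤ M`, and the
extension satisfies the same bounds with respect to `ν'`. -/
theorem rationalization_seminorm_unique_and_dual_iso
    {M : Type*} [AddCommGroup M]
    (htf : ∀ (n : ℤ) (m : M), n ≠ 0 → n • m = 0 → m = 0)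
    (ν : M → ℝ)
    (hν0 : ∀ m : M, 0 ≤ ν m)
    (hνadd : ∀ u v : M, ν (u + v) ≤ ν u + ν v)
    (hνsmul : ∀ (n : ℤ) (u : M), ν (n • u) = |(n : ℝ)| * ν u) :
    (∃! ν' : ℚ ⊗[ℤ] M → ℝ,
      (∀ u v : ℚ ⊗[ℤ] M, ν' (u + v) ≤ ν' u + ν' v) ∧
      (∀ (n : ℤ) (u : ℚ ⊗[ℤ] M), ν' (n • u) = |(n : ℝ)| * ν' u) ∧
      (∀ m : M, ν' ((1 : ℚ) ⊗ₜ[ℤ] m) = ν m)) ∧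
    (∀ ν' : ℚ ⊗[ℤ] M → ℝ,
      ((∀ u v : ℚ ⊗[ℤ] M, ν' (u + v) ≤ ν' u + ν' v) ∧
       (∀ (n : ℤ) (u : ℚ ⊗[ℤ] M), ν' (n • u) = |(n : ℝ)| * ν' u) ∧
       (∀ m : M, ν' ((1 : ℚ) ⊗ₜ[ℤ] m) = ν m)) →
      -- explicit formula on elementary tensors
      (∀ (q : ℚ) (m : M), ν' (q ⊗ₜ[ℤ] m) = |(q : ℝ)| * ν m) ∧
      -- the restriction map on duals is an isometric isomorphism
      (∀ (f : M →+ ℝ) (c : ℝ), 0 ≤ c → (∀ m : M, |f m| ≤ c * ν m) →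
        ∃ F : ℚ ⊗[ℤ] M →+ ℝ,
          (∀ m : M, F ((1 : ℚ) ⊗ₜ[ℤ] m) = f m) ∧
          (∀ x : ℚ ⊗[ℤ] M, |F x| ≤ c * ν' x) ∧
          (∀ F' : ℚ ⊗[ℤ] M →+ ℝ,
            (∀ m : M, F' ((1 : ℚ) ⊗ₜ[ℤ] m) = f m) → F' = F))) :=
  rationalization_seminorm_unique_and_dual_iso_general htf ν hνadd hνsmul
end

section
/- The evaluation map M → M'' from a semi-normed ℤ-module to its double dual, m ↦ (f ↦ f(m)), is isometric (‖ev(m)‖ = ‖m‖ for all m); if the semi-norm on M is a norm, the evaluation map is injective. -/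
/-- Boundedness of an additive functional relative to a semi-norm `ν`. -/
def Bdd {M : Type*} [AddCommGroup M] (ν : M → ℝ) (f : M →+ ℝ) : Prop :=
  ∃ c : ℝ, 0 ≤ c ∧ ∀ m : M, |f m| ≤ c * ν m

/-- The norm of the image of `m` under the evaluation map `M → M''`, that is the
operator norm of `f ↦ f m` on the dual `M'` (bounded functionals with the operator
norm). -/
noncomputable def evalNorm {M : Type*} [AddCommGroup M] (ν : M → ℝ) (m : M) : ℝ :=
  sInf {c : ℝ | 0 ≤ c ∧ ∀ f : M →+ ℝ, Bdd ν f → |f m| ≤ c * opN ν f}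

/-!
Hahn–Banach over `ℤ`. A partial additive functional dominated by a `ℤ`-sublinear `p` is
encoded by its graph, a subgroup `Γ ≤ M × ℝ` lying below the graph of `p`; domination alone
forces such a subgroup to be a graph, so adjoining `(x, a)` needs no compatibility check even
when some multiple of `x` is already in the domain. Zorn gives a maximal such `Γ`, the
one-step extension shows it is total, and so every `m` has an additive `f ≤ p` with
`f m = p m`. For a seminorm `ν` this `f` has operator norm `≤ 1` and attains `ν m` at `m`,
which is the inequality `ν m ≤ ‖ev m‖`; the reverse one is the definition of the operator
norm, and bounded functionals separate `m ≠ m'` by norming `m - m'`.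
-/

section

variable {M : Type*} [AddCommGroup M]

structure IsZSublinear (p : M → ℝ) : Prop where
  add_le : ∀ u v, p (u + v) ≤ p u + p v
  nsmul_eq : ∀ (n : ℕ) u, p (n • u) = n * p u

namespace IsZSublinear

variable {p : M → ℝ}

lemma map_zero (hp : IsZSublinear p) : p 0 = 0 := by
  simpa using hp.nsmul_eq 0 0

lemma neg_le (hp : IsZSublinear p) (u : M) : -p u ≤ p (-u) := by
  have := hp.add_le u (-u)
  rw [add_neg_cancel, hp.map_zero] at this
  linarith

lemma zsmul_le (hp : IsZSublinear p) (n : ℤ) (u : M) : n * p u ≤ p (n • u) := by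
  obtain ⟨k, rfl | rfl⟩ := n.eq_nat_or_neg
  · simp [natCast_zsmul, hp.nsmul_eq]
  · simpa [hp.nsmul_eq] using hp.neg_le (k • u)

end IsZSublinear

def IsDominated (p : M → ℝ) (Γ : AddSubgroup (M × ℝ)) : Prop :=
  ∀ q ∈ Γ, q.2 ≤ p q.1

namespace IsDominated

variable {p : M → ℝ} {Γ : AddSubgroup (M × ℝ)}

lemma snd_eq (hp : IsZSublinear p) (hΓ : IsDominated p Γ) {x : M} {r s : ℝ}
    (hr : (x, r) ∈ Γ) (hs : (x, s) ∈ Γ) : r = s := by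
  have h₁ := hΓ _ (Γ.sub_mem hr hs)
  have h₂ := hΓ _ (Γ.sub_mem hs hr)
  simp only [Prod.mk_sub_mk, sub_self, hp.map_zero] at h₁ h₂
  linarith

lemma sSup_of_isChain {c : Set (AddSubgroup (M × ℝ))} (hc : IsChain (· ≤ ·) c)
    (hne : c.Nonempty) (hdom : ∀ Γ ∈ c, IsDominated p Γ) : IsDominated p (sSup c) := by
  intro q hq
  obtain ⟨Γ, hΓc, hqΓ⟩ := (AddSubgroup.mem_sSup_of_directedOn hne hc.directedOn).1 hq
  exact hdom Γ hΓc q hqΓ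

lemma mul_add_mul_le (hp : IsZSublinear p) (hΓ : IsDominated p Γ) (x : M) {y y' : M} {r r' : ℝ}
    (hr : (y, r) ∈ Γ) (hr' : (y', r') ∈ Γ) (k n : ℕ) :
    n * r + k * r' ≤ n * p (y - k • x) + k * p (y' + n • x) := by
  have hmem : n • (y, r) + k • (y', r') ∈ Γ := Γ.add_mem (Γ.nsmul_mem hr n) (Γ.nsmul_mem hr' k)
  have hsplit : n • y + k • y' = n • (y - k • x) + k • (y' + n • x) := by
    simp only [smul_sub, smul_add, smul_smul, mul_comm n k]
    abel
  calc (n : ℝ) * r + k * r' ≤ p (n • y + k • y') := by simpa using hΓ _ hmem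
    _ ≤ p (n • (y - k • x)) + p (k • (y' + n • x)) := hsplit ▸ hp.add_le _ _
    _ = n * p (y - k • x) + k * p (y' + n • x) := by rw [hp.nsmul_eq, hp.nsmul_eq]

lemma exists_sup_zmultiples (hp : IsZSublinear p) (hΓ : IsDominated p Γ) (x : M) :
    ∃ a : ℝ, IsDominated p (Γ ⊔ AddSubgroup.zmultiples (x, a)) := by
  -- Any `a` between the lower bounds `(r - p (y - k • x)) / k` and the upper bounds in `U` works.
  set U : Set ℝ := {t | ∃ y r, (y, r) ∈ Γ ∧ ∃ n : ℕ, 0 < n ∧ t = (p (y + n • x) - r) / n}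
  have lower_le : ∀ y r, (y, r) ∈ Γ → ∀ k : ℕ, 0 < k → ∀ t ∈ U, (r - p (y - k • x)) / k ≤ t := by
    rintro y r hr k hk _ ⟨y', r', hr', n, hn, rfl⟩
    have := mul_add_mul_le hp hΓ x hr hr' k n
    rw [div_le_div_iff₀ (by positivity) (by positivity)]
    linarith
  have hU : U.Nonempty := ⟨_, 0, 0, Γ.zero_mem, 1, one_pos, rfl⟩
  have hUbdd : BddBelow U := ⟨_, lower_le 0 0 Γ.zero_mem 1 one_pos⟩
  refine ⟨sInf U, fun q hq => ?_⟩
  obtain ⟨⟨y, r⟩, hr, _, ⟨n, rfl⟩, rfl⟩ := AddSubgroup.mem_sup.1 hq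
  simp only [Prod.smul_mk, Prod.mk_add_mk, zsmul_eq_mul]
  obtain ⟨k, rfl | rfl⟩ := n.eq_nat_or_neg
  · rcases k.eq_zero_or_pos with rfl | hk
    · simpa using hΓ _ hr
    · have := csInf_le hUbdd ⟨y, r, hr, k, hk, rfl⟩
      rw [le_div_iff₀ (by positivity)] at this
      rw [natCast_zsmul]
      push_cast
      linarith
  · rcases k.eq_zero_or_pos with rfl | hk
    · simpa using hΓ _ hr
    · have := le_csInf hU (lower_le y r hr k hk)
      rw [div_le_iff₀ (by positivity)] at this
      rw [neg_smul, natCast_zsmul, ← sub_eq_add_neg]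
      push_cast
      linarith

lemma exists_mem_of_maximal (hp : IsZSublinear p) (hΓ : IsDominated p Γ)
    (hmax : ∀ Γ', IsDominated p Γ' → Γ ≤ Γ' → Γ' ≤ Γ) (x : M) : ∃ r, (x, r) ∈ Γ := by
  obtain ⟨a, ha⟩ := exists_sup_zmultiples hp hΓ x
  have hle : Γ ⊔ AddSubgroup.zmultiples (x, a) ≤ Γ := hmax _ ha le_sup_left
  exact ⟨a, hle (AddSubgroup.mem_sup_right (AddSubgroup.mem_zmultiples _))⟩

lemma exists_addMonoidHom_graph (hp : IsZSublinear p) (hΓ : IsDominated p Γ)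
    (htot : ∀ x, ∃ r, (x, r) ∈ Γ) : ∃ f : M →+ ℝ, ∀ x, (x, f x) ∈ Γ := by
  choose g hg using htot
  exact ⟨AddMonoidHom.mk' g fun u v => hΓ.snd_eq hp (hg (u + v)) (Γ.add_mem (hg u) (hg v)), hg⟩

end IsDominated

theorem exists_addMonoidHom_le_of_isDominated {p : M → ℝ} (hp : IsZSublinear p)
    {Γ : AddSubgroup (M × ℝ)} (hΓ : IsDominated p Γ) :
    ∃ f : M →+ ℝ, (∀ x, f x ≤ p x) ∧ ∀ q ∈ Γ, f q.1 = q.2 := by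
  have hchain : ∀ c ⊆ {Γ' | IsDominated p Γ' ∧ Γ ≤ Γ'}, IsChain (· ≤ ·) c → ∀ Γ₀ ∈ c,
      ∃ ub ∈ {Γ' | IsDominated p Γ' ∧ Γ ≤ Γ'}, ∀ Γ' ∈ c, Γ' ≤ ub :=
    fun c hcS hc Γ₀ hΓ₀ => ⟨sSup c,
      ⟨IsDominated.sSup_of_isChain hc ⟨Γ₀, hΓ₀⟩ fun _ h => (hcS h).1,
        (hcS hΓ₀).2.trans (le_sSup hΓ₀)⟩, fun _ => le_sSup⟩
  obtain ⟨Γ', hΓΓ', hmax⟩ := zorn_le_nonempty₀ _ hchain Γ ⟨hΓ, le_rfl⟩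
  have hΓ'dom : IsDominated p Γ' := hmax.1.1
  obtain ⟨f, hf⟩ := hΓ'dom.exists_addMonoidHom_graph hp <|
    hΓ'dom.exists_mem_of_maximal hp fun Γ'' h h' => hmax.2 ⟨h, hmax.1.2.trans h'⟩ h'
  exact ⟨f, fun x => hΓ'dom _ (hf x), fun q hq => hΓ'dom.snd_eq hp (hf q.1) (hΓΓ' hq)⟩

theorem exists_addMonoidHom_le_eq {p : M → ℝ} (hp : IsZSublinear p) (m : M) :
    ∃ f : M →+ ℝ, (∀ x, f x ≤ p x) ∧ f m = p m := by
  have hdom : IsDominated p (AddSubgroup.zmultiples (m, p m)) := by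
    rintro _ ⟨n, rfl⟩
    simpa [zsmul_eq_mul] using hp.zsmul_le n m
  obtain ⟨f, hfp, hf⟩ := exists_addMonoidHom_le_of_isDominated hp hdom
  exact ⟨f, hfp, hf _ (AddSubgroup.mem_zmultiples _)⟩

section EvalNorm

variable {ν : M → ℝ} {f : M →+ ℝ}

lemma abs_le_opN_mul (hν : ∀ x, 0 ≤ ν x) (hf : Bdd ν f) (x : M) : |f x| ≤ opN ν f * ν x := by
  obtain ⟨c, hc⟩ := hf
  rcases (hν x).eq_or_lt with hx | hx
  · simpa [← hx] using hc.2 x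
  · rw [← div_le_iff₀ hx]
    exact le_csInf ⟨c, hc⟩ fun d hd => (div_le_iff₀ hx).2 (hd.2 x)

lemma opN_le_one (hf : ∀ x, |f x| ≤ ν x) : opN ν f ≤ 1 :=
  csInf_le ⟨0, fun _ h => h.1⟩ ⟨zero_le_one, fun x => by simpa using hf x⟩

lemma evalNorm_le (hν : ∀ x, 0 ≤ ν x) (m : M) : evalNorm ν m ≤ ν m :=
  csInf_le ⟨0, fun _ h => h.1⟩ ⟨hν m, fun _ hf => (abs_le_opN_mul hν hf m).trans_eq (mul_comm _ _)⟩

lemma le_evalNorm (hν : ∀ x, 0 ≤ ν x) {m : M} (hf : ∀ x, |f x| ≤ ν x) (hfm : f m = ν m) :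
    ν m ≤ evalNorm ν m := by
  refine le_csInf ⟨ν m, hν m, fun g hg => (abs_le_opN_mul hν hg m).trans_eq (mul_comm _ _)⟩ ?_
  rintro c ⟨hc, hcf⟩
  calc ν m = |f m| := by rw [hfm, abs_of_nonneg (hν m)]
    _ ≤ c * opN ν f := hcf f ⟨1, zero_le_one, by simpa using hf⟩
    _ ≤ c := mul_le_of_le_one_right hc (opN_le_one hf)

end EvalNorm

end

theorem eval_double_dual_isometric_general
    {M : Type*} [AddCommGroup M] (ν : M → ℝ)
    (hνadd : ∀ u v : M, ν (u + v) ≤ ν u + ν v)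
    (hνsmul : ∀ (n : ℤ) (u : M), ν (n • u) = |(n : ℝ)| * ν u) :
    (∀ m : M, evalNorm ν m = ν m) ∧
    ((∀ m : M, ν m = 0 → m = 0) →
      ∀ m m' : M, (∀ f : M →+ ℝ, Bdd ν f → f m = f m') → m = m') := by
  have hp : IsZSublinear ν := ⟨hνadd, fun n u => by simpa using hνsmul n u⟩
  have hνneg : ∀ x, ν (-x) = ν x := fun x => by simpa using hνsmul (-1) x
  have hν : ∀ x, 0 ≤ ν x := fun x => by linarith [hp.neg_le x, hνneg x]
  have hnorming : ∀ m, ∃ f : M →+ ℝ, (∀ x, |f x| ≤ ν x) ∧ f m = ν m := fun m => by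
    obtain ⟨f, hf, hfm⟩ := exists_addMonoidHom_le_eq hp m
    refine ⟨f, fun x => abs_le.2 ⟨?_, hf x⟩, hfm⟩
    linarith [hf (-x), hνneg x, map_neg f x]
  refine ⟨fun m => ?_, fun hnorm m m' hsep => ?_⟩
  · obtain ⟨f, hf, hfm⟩ := hnorming m
    exact (evalNorm_le hν m).antisymm (le_evalNorm hν hf hfm)
  · obtain ⟨f, hf, hfm⟩ := hnorming (m - m')
    have hν0 : ν (m - m') = 0 := by
      rw [← hfm, map_sub, hsep f ⟨1, zero_le_one, by simpa using hf⟩, sub_self]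
    exact sub_eq_zero.1 (hnorm _ hν0)

/-- For a semi-normed ℤ-module `M` the evaluation map `M → M''`,
`m ↦ (f ↦ f m)`, is isometric; if `ν` is a norm, it is injective (i.e. bounded
functionals separate points). -/
theorem eval_double_dual_isometric
    {M : Type*} [AddCommGroup M] (ν : M → ℝ)
    (hν0 : ∀ m : M, 0 ≤ ν m)
    (hνadd : ∀ u v : M, ν (u + v) ≤ ν u + ν v)
    (hνsmul : ∀ (n : ℤ) (u : M), ν (n • u) = |(n : ℝ)| * ν u) :
    (∀ m : M, evalNorm ν m = ν m) ∧
    ((∀ m : M, ν m = 0 → m = 0) →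
      ∀ m m' : M, (∀ f : M →+ ℝ, Bdd ν f → f m = f m') → m = m') :=
  eval_double_dual_isometric_general ν hνadd hνsmul
end

section
/- Let G be a finitely generated group with word metric and let n ≥ 1. Suppose φ_i : C_i(G) → C_i(G), 0 ≤ i ≤ n, are ℤG-module homomorphisms with dφ_i = φ_{i-1}d for 0 ≤ i ≤ n, each bounded from the Sobolev norm to the ℓ¹-norm, and φ induces the identity on 0-th homology of the standard resolution. Then there exist ℤG-module homomorphisms h_i : C_i(G) → C_{i+1}(G), 0 ≤ i ≤ n, bounded from the Sobolev norm to the ℓ¹-norm, satisfying d h_i + h_{i-1} d = φ_i − id for 0 ≤ i ≤ n (with h_{-1}d = 0). -/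
open scoped BigOperators

/-- The simplicial differential on the standard homogeneous resolution. -/
noncomputable def del (G : Type*) (n : ℕ) :
    ((Fin (n + 2) → G) →₀ ℤ) →+ ((Fin (n + 1) → G) →₀ ℤ) :=
  Finsupp.liftAddHom fun σ =>
    zmultiplesHom _ (∑ i : Fin (n + 2), (-1 : ℤ) ^ (i : ℕ) •
      Finsupp.single (fun j => σ (i.succAbove j)) (1 : ℤ))

/-- The ℓ¹-norm of an integral chain. -/
noncomputable def l1 {α : Type*} (x : α →₀ ℤ) : ℝ :=
  ∑ a ∈ x.support, |(x a : ℝ)|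

/-- The word metric on `G` associated to a generating set `S`. -/
noncomputable def wordDist {G : Type*} [Group G] (S : Set G) (x y : G) : ℕ :=
  sInf {n | ∃ l : List G, (∀ g ∈ l, g ∈ S ∨ g⁻¹ ∈ S) ∧ l.length = n ∧ x * l.prod = y}

/-- The diameter of a tuple in the word metric. -/
noncomputable def diamS {G : Type*} [Group G] (S : Set G) {n : ℕ} (σ : Fin n → G) : ℕ :=
  Finset.univ.sup fun p : Fin n × Fin n => wordDist S (σ p.1) (σ p.2)

/-- The Sobolev norm on chains. -/
noncomputable def sob {G : Type*} [Group G] (S : Set G) {n : ℕ}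
    (x : (Fin n → G) →₀ ℤ) : ℝ :=
  ∑ σ ∈ x.support, |(x σ : ℝ)| * (1 + (diamS S σ : ℝ))

/-- The diagonal `G`-action on the standard resolution. -/
noncomputable def gAct {G : Type*} [Group G] (g : G) {n : ℕ} :
    ((Fin n → G) →₀ ℤ) → ((Fin n → G) →₀ ℤ) :=
  Finsupp.mapDomain fun σ => fun j => g * σ j

/-- The augmentation `ε : C₀(G) → ℤ`. -/
noncomputable def aug (G : Type*) (x : (Fin 1 → G) →₀ ℤ) : ℤ :=
  x.sum fun _ a => a

/-!
The cone `h'(σ) = (e, σ)` is a contraction of the augmented complex that preserves the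
ℓ¹-norm, but it is not equivariant. In degree `i`, `φ_i - id - h_{i-1} d` is a cycle by
induction, so coning it off on the simplices with first vertex `e` and extending
equivariantly gives `h_i` with `d h_i = φ_i - id - h_{i-1} d`. A simplex and its translate
have the same diameter and the faces of a simplex have smaller diameter, so the ℓ¹-bounds
propagate from `φ` to `h` against the Sobolev weight `1 + diam σ`.
-/

open Finsupp Function

noncomputable section

section WeightedL1

variable {α β : Type*}

def weightedL1 (w : α → ℝ) (x : α →₀ ℤ) : ℝ :=
  x.sum fun a b => |(b : ℝ)| * w a

variable {w : α → ℝ}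

theorem weightedL1_eq_sum {x : α →₀ ℤ} {s : Finset α} (h : x.support ⊆ s) :
    weightedL1 w x = ∑ a ∈ s, |(x a : ℝ)| * w a :=
  sum_of_support_subset x h _ fun _ _ => by simp

theorem weightedL1_single (a : α) (b : ℤ) : weightedL1 w (single a b) = |(b : ℝ)| * w a :=
  sum_single_index (by simp)

theorem weightedL1_zsmul (b : ℤ) (x : α →₀ ℤ) :
    weightedL1 w (b • x) = |(b : ℝ)| * weightedL1 w x := by
  classical
  rw [weightedL1_eq_sum support_smul, weightedL1, Finsupp.sum, Finset.mul_sum]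
  refine Finset.sum_congr rfl fun a _ => ?_
  simp [abs_mul, mul_assoc]

theorem weightedL1_neg (x : α →₀ ℤ) : weightedL1 w (-x) = weightedL1 w x := by
  simpa using weightedL1_zsmul (w := w) (-1) x

theorem weightedL1_add_le (hw : 0 ≤ w) (x y : α →₀ ℤ) :
    weightedL1 w (x + y) ≤ weightedL1 w x + weightedL1 w y := by
  classical
  rw [weightedL1_eq_sum support_add, weightedL1_eq_sum Finset.subset_union_left,
    weightedL1_eq_sum Finset.subset_union_right, ← Finset.sum_add_distrib]
  refine Finset.sum_le_sum fun a _ => ?_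
  rw [← add_mul, Finsupp.add_apply, Int.cast_add]
  exact mul_le_mul_of_nonneg_right (abs_add_le _ _) (hw a)

theorem weightedL1_sub_le (hw : 0 ≤ w) (x y : α →₀ ℤ) :
    weightedL1 w (x - y) ≤ weightedL1 w x + weightedL1 w y := by
  simpa [sub_eq_add_neg, weightedL1_neg] using weightedL1_add_le hw x (-y)

theorem weightedL1_sum_le (hw : 0 ≤ w) (s : Finset β) (f : β → α →₀ ℤ) :
    weightedL1 w (∑ i ∈ s, f i) ≤ ∑ i ∈ s, weightedL1 w (f i) := by
  classical
  induction s using Finset.induction_on with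
  | empty => simp [weightedL1]
  | insert b s hb ih =>
    rw [Finset.sum_insert hb, Finset.sum_insert hb]
    exact (weightedL1_add_le hw _ _).trans (by gcongr)

theorem weightedL1_mono {w' : α → ℝ} (hww' : w ≤ w') (x : α →₀ ℤ) :
    weightedL1 w x ≤ weightedL1 w' x :=
  Finset.sum_le_sum fun a _ => mul_le_mul_of_nonneg_left (hww' a) (abs_nonneg _)

theorem weightedL1_mapDomain {f : α → β} (hf : Injective f) (w : β → ℝ) (x : α →₀ ℤ) :
    weightedL1 w (mapDomain f x) = weightedL1 (w ∘ f) x :=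
  sum_mapDomain_index_inj hf

theorem l1_eq_weightedL1 (x : α →₀ ℤ) : l1 x = weightedL1 1 x := by
  simp [l1, weightedL1, Finsupp.sum]

theorem l1_sub_le (x y : α →₀ ℤ) : l1 (x - y) ≤ l1 x + l1 y := by
  simpa only [l1_eq_weightedL1] using weightedL1_sub_le zero_le_one x y

theorem l1_mapDomain {f : α → β} (hf : Injective f) (x : α →₀ ℤ) :
    l1 (mapDomain f x) = l1 x := by
  simp only [l1_eq_weightedL1, weightedL1_mapDomain hf]
  rfl

theorem l1_le_mul_weightedL1_of_single {H : (α →₀ ℤ) →+ (β →₀ ℤ)} {c : ℝ}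
    (hH : ∀ a, l1 (H (single a 1)) ≤ c * w a) (x : α →₀ ℤ) :
    l1 (H x) ≤ c * weightedL1 w x := by
  have hx : H x = ∑ a ∈ x.support, x a • H (single a 1) := by
    conv_lhs => rw [← sum_single x]
    simp only [Finsupp.sum, map_sum, ← map_zsmul, smul_single_one]
  rw [hx, l1_eq_weightedL1]
  refine (weightedL1_sum_le zero_le_one _ _).trans ?_
  rw [weightedL1, Finsupp.sum, Finset.mul_sum]
  refine Finset.sum_le_sum fun a _ => ?_
  rw [weightedL1_zsmul, ← l1_eq_weightedL1]
  calc |(x a : ℝ)| * l1 (H (single a 1)) ≤ |(x a : ℝ)| * (c * w a) := by gcongr; exact hH a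
    _ = c * (|(x a : ℝ)| * w a) := by ring

end WeightedL1

section Chains

variable {G : Type*}

theorem addHom_ext_single_one {α M : Type*} [AddGroup M] {f g : (α →₀ ℤ) →+ M}
    (h : ∀ a, f (single a 1) = g (single a 1)) : f = g :=
  addHom_ext' fun a => AddMonoidHom.ext_int (h a)

theorem del_single (n : ℕ) (σ : Fin (n + 2) → G) :
    del G n (single σ 1) =
      ∑ i : Fin (n + 2), (-1 : ℤ) ^ (i : ℕ) • single (fun j => σ (i.succAbove j)) 1 := by
  simp [del]

theorem aug_sub (x y : (Fin 1 → G) →₀ ℤ) : aug G (x - y) = aug G x - aug G y :=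
  sum_sub_index fun _ _ _ => rfl

theorem aug_del (x : (Fin 2 → G) →₀ ℤ) : aug G (del G 0 x) = 0 := by
  have hom : (liftAddHom fun _ => AddMonoidHom.id ℤ).comp (del G 0) = 0 := by
    refine addHom_ext_single_one fun σ => ?_
    simp [del_single, Fin.sum_univ_succ, -liftAddHom_apply, liftAddHom_apply_single]
  exact DFunLike.congr_fun hom x

def cone (v : G) (k : ℕ) : ((Fin (k + 1) → G) →₀ ℤ) →+ ((Fin (k + 2) → G) →₀ ℤ) :=
  mapDomain.addMonoidHom fun σ => Fin.cons v σ

theorem cone_single (v : G) {k : ℕ} (σ : Fin (k + 1) → G) (b : ℤ) :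
    cone v k (single σ b) = single (Fin.cons v σ) b :=
  mapDomain_single

theorem l1_cone (v : G) {k : ℕ} (x : (Fin (k + 1) → G) →₀ ℤ) : l1 (cone v k x) = l1 x :=
  l1_mapDomain (Fin.cons_right_injective (α := fun _ => G) v) x

theorem del_cone_succ (v : G) {k : ℕ} (x : (Fin (k + 2) → G) →₀ ℤ) :
    del G (k + 1) (cone v (k + 1) x) = x - cone v k (del G k x) := by
  have hom : (del G (k + 1)).comp (cone v (k + 1)) =
      AddMonoidHom.id _ - (cone v k).comp (del G k) := by
    refine addHom_ext_single_one fun σ => ?_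
    have hface : ∀ i : Fin (k + 2), (fun j => (Fin.cons v σ : Fin (k + 3) → G) (i.succ.succAbove j))
        = Fin.cons v fun j => σ (i.succAbove j) := fun i => Fin.cons_comp_succ_succAbove v σ i
    simp [cone_single, del_single, Fin.sum_univ_succ (n := k + 2), hface, pow_succ, sub_eq_add_neg]
  exact DFunLike.congr_fun hom x

theorem del_cone_zero (v : G) (x : (Fin 1 → G) →₀ ℤ) :
    del G 0 (cone v 0 x) = x - aug G x • single (fun _ => v) 1 := by
  have hom : (del G 0).comp (cone v 0) = AddMonoidHom.id _ -
      (zmultiplesHom _ (single (fun _ => v) 1)).comp (liftAddHom fun _ => AddMonoidHom.id ℤ) := by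
    refine addHom_ext_single_one fun σ => ?_
    have hface : (fun j => (Fin.cons v σ : Fin 2 → G) ((1 : Fin 2).succAbove j)) = fun _ => v := by
      ext j; fin_cases j; rfl
    simp [cone_single, del_single, Fin.sum_univ_succ, -liftAddHom_apply, liftAddHom_apply_single,
      hface, sub_eq_add_neg]
  exact DFunLike.congr_fun hom x

-- `d (cone v y) = y - cone v (d y)` turns `d d (cone v y)` into `cone v (d d y)`, and every
-- simplex `σ` is the cone over its tail with apex `σ 0`.
theorem del_del (m : ℕ) (x : (Fin (m + 3) → G) →₀ ℤ) : del G m (del G (m + 1) x) = 0 := by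
  induction m with
  | zero =>
    suffices hom : (del G 0).comp (del G 1) = 0 from DFunLike.congr_fun hom x
    refine addHom_ext_single_one fun σ => ?_
    rw [← Fin.cons_self_tail σ, ← cone_single]
    simp [del_cone_succ, del_cone_zero, aug_del]
  | succ m ih =>
    suffices hom : (del G (m + 1)).comp (del G (m + 2)) = 0 from DFunLike.congr_fun hom x
    refine addHom_ext_single_one fun σ => ?_
    rw [← Fin.cons_self_tail σ, ← cone_single]
    simp [del_cone_succ, ih]

end Chains

section Equivariance

variable {G : Type*} [Group G]

theorem gAct_single (g : G) {k : ℕ} (σ : Fin k → G) (b : ℤ) :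
    gAct g (single σ b) = single (fun j => g * σ j) b :=
  mapDomain_single

theorem gAct_one {k : ℕ} (x : (Fin k → G) →₀ ℤ) : gAct 1 x = x := by
  simp only [gAct, one_mul]
  exact mapDomain_id

theorem gAct_gAct (g g' : G) {k : ℕ} (x : (Fin k → G) →₀ ℤ) :
    gAct g (gAct g' x) = gAct (g * g') x := by
  simp only [gAct, ← mapDomain_comp]
  congr 1
  funext σ j
  simp [mul_assoc]

theorem gAct_sub (g : G) {k : ℕ} (x y : (Fin k → G) →₀ ℤ) :
    gAct g (x - y) = gAct g x - gAct g y :=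
  mapDomain_sub

theorem l1_gAct (g : G) {k : ℕ} (x : (Fin k → G) →₀ ℤ) : l1 (gAct g x) = l1 x :=
  l1_mapDomain (fun _ _ h => funext fun j => mul_left_cancel (congrFun h j)) x

def Equivariant {k m : ℕ} (F : ((Fin k → G) →₀ ℤ) →+ ((Fin m → G) →₀ ℤ)) : Prop :=
  ∀ (g : G) (x : (Fin k → G) →₀ ℤ), F (gAct g x) = gAct g (F x)

theorem equivariant_id {k : ℕ} : Equivariant (AddMonoidHom.id ((Fin k → G) →₀ ℤ)) :=
  fun _ _ => rfl

theorem equivariant_zero {k m : ℕ} :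
    Equivariant (0 : ((Fin k → G) →₀ ℤ) →+ ((Fin m → G) →₀ ℤ)) :=
  fun _ _ => mapDomain_zero.symm

theorem Equivariant.comp {k l m : ℕ} {F : ((Fin l → G) →₀ ℤ) →+ ((Fin m → G) →₀ ℤ)}
    {F' : ((Fin k → G) →₀ ℤ) →+ ((Fin l → G) →₀ ℤ)} (hF : Equivariant F)
    (hF' : Equivariant F') : Equivariant (F.comp F') :=
  fun g x => by rw [AddMonoidHom.comp_apply, hF', hF]; rfl

theorem Equivariant.sub {k m : ℕ} {F F' : ((Fin k → G) →₀ ℤ) →+ ((Fin m → G) →₀ ℤ)}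
    (hF : Equivariant F) (hF' : Equivariant F') : Equivariant (F - F') :=
  fun g x => by simp only [AddMonoidHom.sub_apply, hF g x, hF' g x, gAct_sub]

theorem equivariant_del (n : ℕ) : Equivariant (del G n) := by
  intro g x
  have hom : (del G n).comp (mapDomain.addMonoidHom fun σ j => g * σ j) =
      (mapDomain.addMonoidHom fun σ j => g * σ j).comp (del G n) := by
    refine addHom_ext_single_one fun σ => ?_
    simp only [AddMonoidHom.comp_apply, mapDomain.addMonoidHom_apply, mapDomain_single,
      del_single, map_sum, map_zsmul]
  exact DFunLike.congr_fun hom x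

theorem Equivariant.ext {k m : ℕ} {F F' : ((Fin (k + 1) → G) →₀ ℤ) →+ ((Fin m → G) →₀ ℤ)}
    (hF : Equivariant F) (hF' : Equivariant F')
    (h : ∀ τ : Fin (k + 1) → G, τ 0 = 1 → F (single τ 1) = F' (single τ 1)) : F = F' := by
  refine addHom_ext_single_one fun σ => ?_
  have hσ : single σ 1 = gAct (σ 0) (single (fun j => (σ 0)⁻¹ * σ j) 1) := by
    simp [gAct_single]
  rw [hσ, hF, hF', h _ (inv_mul_cancel _)]

def extendEquivariant {k m : ℕ} (f : (Fin (k + 1) → G) → (Fin m → G) →₀ ℤ) :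
    ((Fin (k + 1) → G) →₀ ℤ) →+ ((Fin m → G) →₀ ℤ) :=
  liftAddHom fun σ => zmultiplesHom _ (gAct (σ 0) (f fun j => (σ 0)⁻¹ * σ j))

theorem extendEquivariant_single {k m : ℕ} (f : (Fin (k + 1) → G) → (Fin m → G) →₀ ℤ)
    (σ : Fin (k + 1) → G) :
    extendEquivariant f (single σ 1) = gAct (σ 0) (f fun j => (σ 0)⁻¹ * σ j) := by
  simp [extendEquivariant]

theorem extendEquivariant_single_of_apply_zero_eq_one {k m : ℕ}
    (f : (Fin (k + 1) → G) → (Fin m → G) →₀ ℤ) {τ : Fin (k + 1) → G} (hτ : τ 0 = 1) :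
    extendEquivariant f (single τ 1) = f τ := by
  simp [extendEquivariant_single, hτ, gAct_one]

theorem equivariant_extendEquivariant {k m : ℕ} (f : (Fin (k + 1) → G) → (Fin m → G) →₀ ℤ) :
    Equivariant (extendEquivariant f) := by
  intro g x
  have hom : (extendEquivariant f).comp (mapDomain.addMonoidHom fun σ j => g * σ j) =
      (mapDomain.addMonoidHom fun σ j => g * σ j).comp (extendEquivariant f) := by
    refine addHom_ext_single_one fun σ => ?_
    simp only [AddMonoidHom.comp_apply, mapDomain.addMonoidHom_apply, mapDomain_single,
      extendEquivariant_single]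
    rw [← gAct, gAct_gAct]
    simp [mul_assoc]
  exact DFunLike.congr_fun hom x

end Equivariance

section SobolevBounds

variable {G : Type*} [Group G] {S : Set G}

theorem wordDist_mul_left (g x y : G) :
    wordDist S (g * x) (g * y) = wordDist S x y := by
  simp only [wordDist, mul_assoc, mul_right_inj]

theorem diamS_mul_left (g : G) {k : ℕ} (σ : Fin k → G) :
    diamS S (fun j => g * σ j) = diamS S σ := by
  simp only [diamS, wordDist_mul_left]

theorem diamS_comp_le {k m : ℕ} (σ : Fin k → G) (f : Fin m → Fin k) :
    diamS S (fun j => σ (f j)) ≤ diamS S σ :=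
  Finset.sup_le fun p _ =>
    Finset.le_sup (f := fun p : Fin k × Fin k => wordDist S (σ p.1) (σ p.2))
      (Finset.mem_univ (f p.1, f p.2))

theorem sob_eq_weightedL1 {k : ℕ} (x : (Fin k → G) →₀ ℤ) :
    sob S x = weightedL1 (fun σ => 1 + (diamS S σ : ℝ)) x :=
  rfl

theorem sob_single_one {k : ℕ} (σ : Fin k → G) : sob S (single σ 1) = 1 + (diamS S σ : ℝ) := by
  simp [sob_eq_weightedL1, weightedL1_single]

theorem l1_le_sob {k : ℕ} (x : (Fin k → G) →₀ ℤ) : l1 x ≤ sob S x := by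
  rw [l1_eq_weightedL1, sob_eq_weightedL1]
  exact weightedL1_mono (fun σ => by simp) x

theorem sob_del_single_le (k : ℕ) (τ : Fin (k + 2) → G) :
    sob S (del G k (single τ 1)) ≤ (k + 2) * (1 + (diamS S τ : ℝ)) := by
  have hw : (0 : (Fin (k + 1) → G) → ℝ) ≤ fun σ => 1 + (diamS S σ : ℝ) := fun σ => by positivity
  rw [del_single, sob_eq_weightedL1]
  refine (weightedL1_sum_le hw _ _).trans ?_
  calc ∑ i : Fin (k + 2), weightedL1 _ ((-1 : ℤ) ^ (i : ℕ) • single (fun j => τ (i.succAbove j)) 1)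
      ≤ ∑ _i : Fin (k + 2), (1 + (diamS S τ : ℝ)) := by
        refine Finset.sum_le_sum fun i _ => ?_
        simp only [weightedL1_zsmul, weightedL1_single, Int.cast_pow, Int.cast_neg, Int.cast_one,
          abs_pow, abs_neg, abs_one, one_pow, one_mul]
        gcongr
        exact diamS_comp_le τ i.succAbove
    _ = (k + 2) * (1 + (diamS S τ : ℝ)) := by simp; ring

def SobBounded (S : Set G) {k : ℕ} {β : Type*} (F : ((Fin k → G) →₀ ℤ) →+ (β →₀ ℤ)) : Prop :=
  ∃ c : ℝ, 0 ≤ c ∧ ∀ x : (Fin k → G) →₀ ℤ, l1 (F x) ≤ c * sob S x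

variable {k : ℕ} {β : Type*}

theorem SobBounded.of_single {F : ((Fin k → G) →₀ ℤ) →+ (β →₀ ℤ)} {c : ℝ} (hc : 0 ≤ c)
    (hF : ∀ σ : Fin k → G, l1 (F (single σ 1)) ≤ c * (1 + (diamS S σ : ℝ))) :
    SobBounded S F :=
  ⟨c, hc, l1_le_mul_weightedL1_of_single hF⟩

theorem sobBounded_id : SobBounded S (AddMonoidHom.id ((Fin k → G) →₀ ℤ)) :=
  ⟨1, zero_le_one, fun x => (one_mul (sob S x)).symm ▸ l1_le_sob x⟩

theorem sobBounded_zero : SobBounded S (0 : ((Fin k → G) →₀ ℤ) →+ (β →₀ ℤ)) :=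
  ⟨0, le_rfl, fun x => by simp [l1]⟩

theorem SobBounded.sub {F F' : ((Fin k → G) →₀ ℤ) →+ (β →₀ ℤ)} (hF : SobBounded S F)
    (hF' : SobBounded S F') : SobBounded S (F - F') := by
  obtain ⟨c, hc, hFc⟩ := hF
  obtain ⟨c', hc', hFc'⟩ := hF'
  refine ⟨c + c', add_nonneg hc hc', fun x => ?_⟩
  calc l1 ((F - F') x) ≤ l1 (F x) + l1 (F' x) := l1_sub_le _ _
    _ ≤ c * sob S x + c' * sob S x := add_le_add (hFc x) (hFc' x)
    _ = (c + c') * sob S x := by ring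

theorem SobBounded.comp_del {F : ((Fin (k + 1) → G) →₀ ℤ) →+ (β →₀ ℤ)}
    (hF : SobBounded S F) : SobBounded S (F.comp (del G k)) := by
  obtain ⟨c, hc, hFc⟩ := hF
  refine .of_single (c := c * (k + 2)) (by positivity) fun τ => ?_
  calc l1 (F (del G k (single τ 1))) ≤ c * sob S (del G k (single τ 1)) := hFc _
    _ ≤ c * ((k + 2) * (1 + (diamS S τ : ℝ))) := by gcongr; exact sob_del_single_le k τ
    _ = c * (k + 2) * (1 + (diamS S τ : ℝ)) := by ring

end SobolevBounds

section Homotopy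

variable {G : Type*} [Group G]

def equivariantCone {k : ℕ} (F : ((Fin (k + 1) → G) →₀ ℤ) →+ ((Fin (k + 1) → G) →₀ ℤ)) :
    ((Fin (k + 1) → G) →₀ ℤ) →+ ((Fin (k + 2) → G) →₀ ℤ) :=
  extendEquivariant fun τ => cone 1 k (F (single τ 1))

theorem equivariant_equivariantCone {k : ℕ}
    (F : ((Fin (k + 1) → G) →₀ ℤ) →+ ((Fin (k + 1) → G) →₀ ℤ)) :
    Equivariant (equivariantCone F) :=
  equivariant_extendEquivariant _

theorem del_comp_equivariantCone_zero {F : ((Fin 1 → G) →₀ ℤ) →+ ((Fin 1 → G) →₀ ℤ)}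
    (hF : Equivariant F) (hcycle : ∀ x, aug G (F x) = 0) :
    (del G 0).comp (equivariantCone F) = F :=
  Equivariant.ext ((equivariant_del 0).comp (equivariant_equivariantCone F)) hF fun τ hτ => by
    simp [equivariantCone, extendEquivariant_single_of_apply_zero_eq_one _ hτ, del_cone_zero, hcycle]

theorem del_comp_equivariantCone_succ {k : ℕ}
    {F : ((Fin (k + 2) → G) →₀ ℤ) →+ ((Fin (k + 2) → G) →₀ ℤ)}
    (hF : Equivariant F) (hcycle : ∀ x, del G k (F x) = 0) :
    (del G (k + 1)).comp (equivariantCone F) = F :=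
  Equivariant.ext ((equivariant_del _).comp (equivariant_equivariantCone F)) hF fun τ hτ => by
    simp [equivariantCone, extendEquivariant_single_of_apply_zero_eq_one _ hτ, del_cone_succ, hcycle]

theorem sobBounded_equivariantCone {S : Set G} {k : ℕ}
    {F : ((Fin (k + 1) → G) →₀ ℤ) →+ ((Fin (k + 1) → G) →₀ ℤ)} (hF : SobBounded S F) :
    SobBounded S (equivariantCone F) := by
  obtain ⟨c, hc, hFc⟩ := hF
  refine .of_single hc fun σ => ?_
  rw [equivariantCone, extendEquivariant_single, l1_gAct, l1_cone]
  calc _ ≤ c * sob S (single (fun j => (σ 0)⁻¹ * σ j) 1) := hFc _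
    _ = c * (1 + (diamS S σ : ℝ)) := by rw [sob_single_one, diamS_mul_left]

variable (φ : ∀ i : ℕ, ((Fin (i + 1) → G) →₀ ℤ) →+ ((Fin (i + 1) → G) →₀ ℤ))

def homotopy : ∀ i : ℕ, ((Fin (i + 1) → G) →₀ ℤ) →+ ((Fin (i + 2) → G) →₀ ℤ)
  | 0 => equivariantCone (φ 0 - AddMonoidHom.id _)
  | i + 1 => equivariantCone (φ (i + 1) - AddMonoidHom.id _ - (homotopy i).comp (del G i))

def homotopyDel : ∀ i : ℕ, ((Fin (i + 1) → G) →₀ ℤ) →+ ((Fin (i + 1) → G) →₀ ℤ)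
  | 0 => 0
  | i + 1 => (homotopy φ i).comp (del G i)

theorem homotopyDel_succ_apply (i : ℕ) (x : (Fin (i + 2) → G) →₀ ℤ) :
    homotopyDel φ (i + 1) x = homotopy φ i (del G i x) :=
  rfl

theorem homotopy_eq (i : ℕ) :
    homotopy φ i = equivariantCone (φ i - AddMonoidHom.id _ - homotopyDel φ i) := by
  cases i <;> simp [homotopy, homotopyDel]

theorem equivariant_homotopy (i : ℕ) : Equivariant (homotopy φ i) := by
  rw [homotopy_eq]
  exact equivariant_equivariantCone _

theorem equivariant_homotopyDel : ∀ i, Equivariant (homotopyDel φ i)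
  | 0 => equivariant_zero
  | i + 1 => (equivariant_homotopy φ i).comp (equivariant_del i)

theorem homotopyDel_del (i : ℕ) (x : (Fin (i + 2) → G) →₀ ℤ) :
    homotopyDel φ i (del G i x) = 0 := by
  cases i with
  | zero => rfl
  | succ i => rw [homotopyDel_succ_apply, del_del, map_zero]

variable {φ} {n : ℕ}

theorem del_comp_homotopy (hequiv : ∀ i ≤ n, Equivariant (φ i))
    (hchain : ∀ i, i + 1 ≤ n → ∀ x, del G i (φ (i + 1) x) = φ i (del G i x))
    (hH0 : ∀ x, aug G (φ 0 x) = aug G x) (i : ℕ) (hi : i ≤ n) :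
    (del G i).comp (homotopy φ i) = φ i - AddMonoidHom.id _ - homotopyDel φ i := by
  induction i with
  | zero =>
    rw [homotopy_eq]
    refine del_comp_equivariantCone_zero
      (((hequiv 0 hi).sub equivariant_id).sub (equivariant_homotopyDel φ 0)) fun x => ?_
    simp [aug_sub, hH0, homotopyDel]
  | succ i ih =>
    rw [homotopy_eq]
    refine del_comp_equivariantCone_succ
      (((hequiv _ hi).sub equivariant_id).sub (equivariant_homotopyDel φ _)) fun x => ?_
    have hdx := DFunLike.congr_fun (ih (by omega)) (del G i x)
    simp only [AddMonoidHom.sub_apply, AddMonoidHom.comp_apply, AddMonoidHom.id_apply,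
      homotopyDel_succ_apply] at hdx ⊢
    rw [map_sub, map_sub, hchain i hi, hdx, homotopyDel_del]
    abel

theorem sobBounded_homotopy {S : Set G} (hbdd : ∀ i ≤ n, SobBounded S (φ i)) (i : ℕ)
    (hi : i ≤ n) : SobBounded S (homotopy φ i) := by
  induction i with
  | zero =>
    rw [homotopy_eq]
    exact sobBounded_equivariantCone (((hbdd 0 hi).sub sobBounded_id).sub sobBounded_zero)
  | succ i ih =>
    rw [homotopy_eq]
    exact sobBounded_equivariantCone
      (((hbdd _ hi).sub sobBounded_id).sub (ih (by omega)).comp_del)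

end Homotopy

end

theorem basic_bounded_homotopy_general {G : Type*} [Group G] (S : Set G) (n : ℕ)
    (φ : ∀ i : ℕ, ((Fin (i + 1) → G) →₀ ℤ) →+ ((Fin (i + 1) → G) →₀ ℤ))
    (hequiv : ∀ i ≤ n, ∀ (g : G) (x : (Fin (i + 1) → G) →₀ ℤ),
      φ i (gAct g x) = gAct g (φ i x))
    (hbdd : ∀ i ≤ n, ∃ c : ℝ, 0 ≤ c ∧ ∀ x : (Fin (i + 1) → G) →₀ ℤ,
      l1 (φ i x) ≤ c * sob S x)
    (hchain : ∀ i : ℕ, i + 1 ≤ n → ∀ x : (Fin (i + 2) → G) →₀ ℤ,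
      del G i (φ (i + 1) x) = φ i (del G i x))
    (hH0 : ∀ x : (Fin 1 → G) →₀ ℤ, aug G (φ 0 x) = aug G x) :
    ∃ h : ∀ i : ℕ, ((Fin (i + 1) → G) →₀ ℤ) →+ ((Fin (i + 2) → G) →₀ ℤ),
      (∀ i ≤ n, ∀ (g : G) (x : (Fin (i + 1) → G) →₀ ℤ),
        h i (gAct g x) = gAct g (h i x)) ∧
      (∀ i ≤ n, ∃ c : ℝ, 0 ≤ c ∧ ∀ x : (Fin (i + 1) → G) →₀ ℤ,
        l1 (h i x) ≤ c * sob S x) ∧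
      (∀ x : (Fin 1 → G) →₀ ℤ, del G 0 (h 0 x) = φ 0 x - x) ∧
      (∀ i : ℕ, i + 1 ≤ n → ∀ x : (Fin (i + 2) → G) →₀ ℤ,
        del G (i + 1) (h (i + 1) x) + h i (del G i x) = φ (i + 1) x - x) := by
  have hdel := del_comp_homotopy hequiv hchain hH0
  refine ⟨homotopy φ, fun i _ => equivariant_homotopy φ i, sobBounded_homotopy hbdd,
    fun x => ?_, fun i hi x => ?_⟩
  · simpa [homotopyDel] using DFunLike.congr_fun (hdel 0 n.zero_le) x
  · rw [← homotopyDel_succ_apply, ← AddMonoidHom.comp_apply, hdel (i + 1) hi]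
    simp

/-- Let `G` be a finitely generated group with a word metric and
`n ≥ 1`.  If `φ_i : C_i(G) → C_i(G)` (`0 ≤ i ≤ n`) are `ℤG`-equivariant maps
commuting with the differential, bounded from the Sobolev norm to the ℓ¹-norm, and
inducing the identity on the 0-th homology (i.e. preserving the augmentation), then
there are `ℤG`-equivariant maps `h_i : C_i(G) → C_{i+1}(G)` (`0 ≤ i ≤ n`), bounded
from the Sobolev norm to the ℓ¹-norm, with `d h_i + h_{i-1} d = φ_i − id`
(interpreting `h_{-1} d = 0`). -/
theorem basic_bounded_homotopy {G : Type*} [Group G] (S : Set G) (hS : S.Finite)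
    (hgen : Subgroup.closure S = ⊤) (n : ℕ) (hn : 1 ≤ n)
    (φ : ∀ i : ℕ, ((Fin (i + 1) → G) →₀ ℤ) →+ ((Fin (i + 1) → G) →₀ ℤ))
    (hequiv : ∀ i ≤ n, ∀ (g : G) (x : (Fin (i + 1) → G) →₀ ℤ),
      φ i (gAct g x) = gAct g (φ i x))
    (hbdd : ∀ i ≤ n, ∃ c : ℝ, 0 ≤ c ∧ ∀ x : (Fin (i + 1) → G) →₀ ℤ,
      l1 (φ i x) ≤ c * sob S x)
    (hchain : ∀ i : ℕ, i + 1 ≤ n → ∀ x : (Fin (i + 2) → G) →₀ ℤ,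
      del G i (φ (i + 1) x) = φ i (del G i x))
    (hH0 : ∀ x : (Fin 1 → G) →₀ ℤ, aug G (φ 0 x) = aug G x) :
    ∃ h : ∀ i : ℕ, ((Fin (i + 1) → G) →₀ ℤ) →+ ((Fin (i + 2) → G) →₀ ℤ),
      (∀ i ≤ n, ∀ (g : G) (x : (Fin (i + 1) → G) →₀ ℤ),
        h i (gAct g x) = gAct g (h i x)) ∧
      (∀ i ≤ n, ∃ c : ℝ, 0 ≤ c ∧ ∀ x : (Fin (i + 1) → G) →₀ ℤ,
        l1 (h i x) ≤ c * sob S x) ∧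
      (∀ x : (Fin 1 → G) →₀ ℤ, del G 0 (h 0 x) = φ 0 x - x) ∧
      (∀ i : ℕ, i + 1 ≤ n → ∀ x : (Fin (i + 2) → G) →₀ ℤ,
        del G (i + 1) (h (i + 1) x) + h i (del G i x) = φ (i + 1) x - x) :=
  basic_bounded_homotopy_general S n φ hequiv hbdd hchain hH0
end
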